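/- arXiv:2009.07614 — 6 statements merged into one kernel-verified Lean document; each statement's English description precedes it below -/
import Mathlib

section
/- Let G be a finite abelian group, a, b ∈ G, and write |G| for the cardinality of G. Then in ⋀[ℚ]² M one has ψ(a,b) = (1/|G|) · Σ_{x∈G} δ(0, x, a−x, b+x) + (1/(4|G|²)) · Σ_{x,y∈G} ( δ(0, a, b+2x, y) − δ(0, b, a+2x, y) − δ(0, a+b, b+2x, y) ). (This is the abstract form of the paper's triangulation of the Manin 3-term relation in K₂, Theorem 4.2, equation (eq manin3).) -/
noncomputable def wedge (R : Type*) [CommRing R] {M : Type*} [AddCommGroup M] [Module R M]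
    (u v : M) : ⋀[R]^2 M :=
  ⟨ExteriorAlgebra.ιMulti R 2 ![u, v],
    ExteriorAlgebra.ιMulti_range R 2 (Set.mem_range_self _)⟩

/-- The additive counterpart of `u(a,b,c,d) ∧ (1 - u(a,b,c,d))`, built from the
three-variable expression `φ`. -/
noncomputable def phi (R : Type*) [CommRing R] {M G : Type*} [AddCommGroup M] [Module R M]
    [AddCommGroup G] (g : G → M) (x y z : G) : ⋀[R]^2 M :=
  wedge R (g (z + x) + g (z - x)) (g (y + x) + g (y - x))
    + wedge R (g (y + x) + g (y - x)) (g (z + y) + g (z - y))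
    + wedge R (g (z + y) + g (z - y)) (g (z + x) + g (z - x))

noncomputable def delta (R : Type*) [CommRing R] {M G : Type*} [AddCommGroup M] [Module R M]
    [AddCommGroup G] (g : G → M) (a b c d : G) : ⋀[R]^2 M :=
  phi R g a b c + phi R g c d a + phi R g b a d + phi R g d c b

/-- The additive counterpart of the Manin 3-term expression
`g_a ∧ g_b + g_b ∧ g_c + g_c ∧ g_a` with `a + b + c = 0`. -/
noncomputable def psi (R : Type*) [CommRing R] {M G : Type*} [AddCommGroup M] [Module R M]
    [AddCommGroup G] (g : G → M) (a b : G) : ⋀[R]^2 M :=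
  wedge R (g a) (g b) + wedge R (g b) (g (-a - b)) + wedge R (g (-a - b)) (g a)

namespace Manin3Aux
set_option linter.unusedSectionVars false

open ExteriorAlgebra Finset

variable {M : Type*} [AddCommGroup M] [Module ℚ M]

noncomputable def iw (u v : M) : ExteriorAlgebra ℚ M := ι ℚ u * ι ℚ v

lemma wedge_val (u v : M) :
    ((wedge ℚ u v : ⋀[ℚ]^2 M) : ExteriorAlgebra ℚ M) = iw u v := by
  show ExteriorAlgebra.ιMulti ℚ 2 ![u, v] = _
  rw [ExteriorAlgebra.ιMulti_apply]
  simp [List.ofFn_succ, iw]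

lemma iw_anticomm (u v : M) : iw u v = - iw v u :=
  eq_neg_of_add_eq_zero_left (ExteriorAlgebra.ι_add_mul_swap u v)

lemma iw_add_add (p q r s : M) :
    iw (p + q) (r + s) = iw p r + iw p s + iw q r + iw q s := by
  simp only [iw, map_add, add_mul, mul_add]; abel

lemma eq_zero_of_eq_neg {A : Type*} [AddCommGroup A] [Module ℚ A] {x : A}
    (h : x = -x) : x = 0 := by
  have h2 : (2 : ℚ) • x = 0 := by
    rw [two_smul]; nth_rewrite 1 [h]; abel
  exact (smul_eq_zero.mp h2).resolve_left (by norm_num)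

variable {G : Type*} [AddCommGroup G] [Fintype G]

lemma sum_eq_zero_of_comp_neg {A : Type*} [AddCommGroup A] [Module ℚ A]
    (f : G → A) (e : G ≃ G) (h : ∀ x, f (e x) = -f x) : ∑ x : G, f x = 0 := by
  refine eq_zero_of_eq_neg ?_
  conv_lhs => rw [← Equiv.sum_comp e f]
  rw [← Finset.sum_neg_distrib]
  exact Finset.sum_congr rfl fun x _ => h x

variable (g : G → M)

noncomputable def hM (p q : G) : M := g (q + p) + g (q - p)

noncomputable def triA (u v w : M) : ExteriorAlgebra ℚ M := iw u v + iw v w + iw w u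

noncomputable def phiA (x y z : G) : ExteriorAlgebra ℚ M :=
  triA (hM g x z) (hM g x y) (hM g y z)

noncomputable def deltaA (a b c d : G) : ExteriorAlgebra ℚ M :=
  phiA g a b c + phiA g c d a + phiA g b a d + phiA g d c b

noncomputable def psiA (a b : G) : ExteriorAlgebra ℚ M :=
  iw (g a) (g b) + iw (g b) (g (a + b)) + iw (g (a + b)) (g a)

lemma phi_val (x y z : G) :
    ((phi ℚ g x y z : ⋀[ℚ]^2 M) : ExteriorAlgebra ℚ M) = phiA g x y z := by
  simp only [phi, Submodule.coe_add, wedge_val, phiA, triA, hM]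

lemma delta_val (a b c d : G) :
    ((delta ℚ g a b c d : ⋀[ℚ]^2 M) : ExteriorAlgebra ℚ M) = deltaA g a b c d := by
  simp only [delta, Submodule.coe_add, phi_val, deltaA]

lemma psi_val (hg : ∀ x : G, g (-x) = g x) (a b : G) :
    ((psi ℚ g a b : ⋀[ℚ]^2 M) : ExteriorAlgebra ℚ M) = psiA g a b := by
  have h1 : g (-a - b) = g (a + b) := by
    rw [show (-a - b : G) = -(a + b) by abel, hg]
  simp only [psi, Submodule.coe_add, wedge_val, psiA, h1]

variable (hg : ∀ x : G, g (-x) = g x)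
include hg

lemma hM_comm (p q : G) : hM g p q = hM g q p := by
  unfold hM
  rw [show (p - q : G) = -(q - p) by abel, hg, add_comm q p]

lemma hM_negneg (p q : G) : hM g (-p) (-q) = hM g p q := by
  unfold hM
  rw [show (-q + -p : G) = -(q + p) by abel, show (-q - -p : G) = -(q - p) by abel, hg, hg]

omit hg in
lemma hM_zero (q : G) : hM g 0 q = g q + g q := by
  unfold hM; rw [add_zero, sub_zero]

omit hg in
lemma triA_cyc (u v w : M) : triA u v w = triA v w u := by
  unfold triA; abel

omit hg in
lemma triA_swap (u v w : M) : triA v u w = -triA u v w := by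
  unfold triA
  rw [iw_anticomm v u, iw_anticomm u w, iw_anticomm w v]; abel

lemma phiA_swap12 (x y z : G) : phiA g y x z = -phiA g x y z := by
  unfold phiA
  rw [hM_comm g hg y x, triA_cyc]
  exact triA_swap _ _ _

lemma phiA_swap23 (x y z : G) : phiA g x z y = -phiA g x y z := by
  unfold phiA
  rw [hM_comm g hg z y]
  exact triA_swap _ _ _

lemma phiA_cyc (x y z : G) : phiA g x y z = phiA g y z x := by
  unfold phiA
  rw [hM_comm g hg y x, hM_comm g hg z x]
  exact triA_cyc _ _ _

lemma phiA_rev (x y z : G) : phiA g z y x = -phiA g x y z := by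
  rw [phiA_cyc g hg z y x]
  exact phiA_swap12 g hg x y z

lemma phiA_zero_negneg (p q : G) : phiA g 0 (-p) (-q) = phiA g 0 p q := by
  unfold phiA
  rw [hM_negneg g hg p q]
  simp only [hM_zero, hg]

omit hg in
lemma sum_g_add (c : G) : ∑ t : G, g (t + c) = ∑ t : G, g t :=
  Equiv.sum_comp (Equiv.addRight c) g

omit hg in
lemma sum_hM_right (c : G) : ∑ t : G, hM g c t = (∑ t : G, g t) + ∑ t : G, g t := by
  unfold hM
  rw [Finset.sum_add_distrib]
  congr 1
  · exact sum_g_add g c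
  · simp_rw [sub_eq_add_neg]; exact sum_g_add g (-c)

omit hg in
lemma sum_iw_left (f : G → M) (v : M) : ∑ t : G, iw (f t) v = iw (∑ t : G, f t) v := by
  simp only [iw, map_sum, Finset.sum_mul]

omit hg in
lemma sum_iw_right (u : M) (f : G → M) : ∑ t : G, iw u (f t) = iw u (∑ t : G, f t) := by
  simp only [iw, map_sum, Finset.mul_sum]

lemma sum_iw_shift (c d : G) : ∑ t : G, iw (g (t + c)) (g (t + d)) = 0 := by
  apply sum_eq_zero_of_comp_neg _ ((Equiv.neg G).trans (Equiv.addLeft (-(c + d))))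
  intro t
  simp only [Equiv.trans_apply, Equiv.neg_apply, Equiv.coe_addLeft]
  rw [show (-(c + d) + -t) + c = -(t + d) by abel, show (-(c + d) + -t) + d = -(t + c) by abel,
    hg, hg]
  exact iw_anticomm _ _

lemma sum_phiA_third (c d : G) : ∑ t : G, phiA g c d t = 0 := by
  unfold phiA triA
  rw [Finset.sum_add_distrib, Finset.sum_add_distrib]
  have S1 : ∑ t : G, iw (hM g c t) (hM g c d) = iw ((∑ t : G, g t) + ∑ t : G, g t) (hM g c d) := by
    rw [sum_iw_left, sum_hM_right]
  have S2 : ∑ t : G, iw (hM g c d) (hM g d t) = iw (hM g c d) ((∑ t : G, g t) + ∑ t : G, g t) := by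
    rw [sum_iw_right, sum_hM_right]
  have S3 : ∑ t : G, iw (hM g d t) (hM g c t) = 0 := by
    unfold hM
    simp_rw [iw_add_add, sub_eq_add_neg]
    rw [Finset.sum_add_distrib, Finset.sum_add_distrib, Finset.sum_add_distrib]
    rw [sum_iw_shift g hg d c, sum_iw_shift g hg d (-c), sum_iw_shift g hg (-d) c,
      sum_iw_shift g hg (-d) (-c)]
    simp
  rw [S1, S2, S3, iw_anticomm]
  abel

lemma sumA1 (a : G) : ∑ x : G, phiA g 0 x (a - x) = 0 := by
  apply sum_eq_zero_of_comp_neg _ (Equiv.subLeft a)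
  intro x
  simp only [Equiv.subLeft_apply]
  rw [show a - (a - x) = x by abel]
  exact phiA_swap23 g hg 0 x (a - x)

lemma sumA2 (a b : G) : ∑ x : G, phiA g 0 (a - x) (b + x) = 0 := by
  apply sum_eq_zero_of_comp_neg _ (Equiv.subLeft (a - b))
  intro x
  simp only [Equiv.subLeft_apply]
  rw [show a - (a - b - x) = b + x by abel, show b + (a - b - x) = a - x by abel]
  exact phiA_swap23 g hg 0 (a - x) (b + x)

lemma sumA3 (b : G) : ∑ x : G, phiA g 0 x (b + x) = 0 := by
  apply sum_eq_zero_of_comp_neg _ (Equiv.subLeft (-b))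
  intro x
  simp only [Equiv.subLeft_apply]
  rw [show b + (-b - x) = -x by abel, show (-b - x : G) = -(b + x) by abel,
    phiA_zero_negneg g hg]
  exact phiA_swap23 g hg 0 x (b + x)

lemma sum_delta1 (a b : G) :
    ∑ x : G, deltaA g 0 x (a - x) (b + x) = - ∑ x : G, phiA g x (a - x) (b + x) := by
  unfold deltaA
  rw [Finset.sum_add_distrib, Finset.sum_add_distrib, Finset.sum_add_distrib]
  have h1 := sumA1 g hg a
  have h2 : ∑ x : G, phiA g (a - x) (b + x) 0 = 0 := by
    rw [Finset.sum_congr rfl fun x _ => by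
      rw [phiA_cyc g hg (a - x) (b + x) 0, phiA_cyc g hg (b + x) 0 (a - x)]]
    exact sumA2 g hg a b
  have h3 : ∑ x : G, phiA g x 0 (b + x) = 0 := by
    rw [Finset.sum_congr rfl fun x _ => phiA_swap12 g hg 0 x (b + x)]
    rw [Finset.sum_neg_distrib, sumA3 g hg b, neg_zero]
  have h4 : ∑ x : G, phiA g (b + x) (a - x) x = - ∑ x : G, phiA g x (a - x) (b + x) := by
    rw [Finset.sum_congr rfl fun x _ => phiA_rev g hg x (a - x) (b + x)]
    rw [Finset.sum_neg_distrib]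
  rw [h1, h2, h3, h4]
  abel

lemma sum_delta_y (c d : G) :
    ∑ y : G, deltaA g 0 c d y = (Fintype.card G : ℚ) • phiA g 0 c d := by
  unfold deltaA
  rw [Finset.sum_add_distrib, Finset.sum_add_distrib, Finset.sum_add_distrib]
  have h1 : ∑ _y : G, phiA g 0 c d = (Fintype.card G : ℚ) • phiA g 0 c d := by
    rw [Finset.sum_const, Nat.cast_smul_eq_nsmul ℚ, Finset.card_univ]
  have h2 : ∑ y : G, phiA g d y 0 = 0 := by
    rw [Finset.sum_congr rfl fun y _ => by
      rw [phiA_cyc g hg d y 0, phiA_cyc g hg y 0 d]]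
    exact sum_phiA_third g hg 0 d
  have h3 : ∑ y : G, phiA g c 0 y = 0 := by
    rw [Finset.sum_congr rfl fun y _ => phiA_swap12 g hg 0 c y]
    rw [Finset.sum_neg_distrib, sum_phiA_third g hg 0 c, neg_zero]
  have h4 : ∑ y : G, phiA g y d c = 0 := by
    rw [Finset.sum_congr rfl fun y _ => phiA_cyc g hg y d c]
    exact sum_phiA_third g hg d c
  rw [h1, h2, h3, h4]
  abel

noncomputable def KM (c : G) : M := ∑ x : G, g (c + (x + x))

noncomputable def EE (c d : G) : ExteriorAlgebra ℚ M :=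
  ∑ x : G, iw (g (c + (x + x))) (g (d + (x + x)))

omit hg in
lemma KM_shift (c e : G) : KM g (c + (e + e)) = KM g c :=
  calc KM g (c + (e + e)) = ∑ x : G, g (c + ((x + e) + (x + e))) :=
        Finset.sum_congr rfl fun x _ => congrArg g (by abel)
    _ = KM g c := Equiv.sum_comp (Equiv.addRight e) (fun x => g (c + (x + x)))

lemma KM_neg (c : G) : KM g (-c) = KM g c :=
  calc KM g (-c) = ∑ x : G, g (c + (-x + -x)) :=
        Finset.sum_congr rfl fun x _ => by
          rw [show (-c + (x + x) : G) = -(c + (-x + -x)) by abel, hg]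
    _ = KM g c := Equiv.sum_comp (Equiv.neg G) (fun x => g (c + (x + x)))

omit hg in
lemma EE_swap (c d : G) : EE g c d = - EE g d c := by
  unfold EE
  rw [← Finset.sum_neg_distrib]
  exact Finset.sum_congr rfl fun x _ => iw_anticomm _ _

omit hg in
lemma EE_shift (c d e : G) : EE g (c + (e + e)) (d + (e + e)) = EE g c d :=
  calc EE g (c + (e + e)) (d + (e + e))
      = ∑ x : G, iw (g (c + ((x + e) + (x + e)))) (g (d + ((x + e) + (x + e)))) :=
        Finset.sum_congr rfl fun x _ => by
          rw [show (c + (e + e) + (x + x) : G) = c + ((x + e) + (x + e)) by abel,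
            show (d + (e + e) + (x + x) : G) = d + ((x + e) + (x + e)) by abel]
    _ = EE g c d :=
        Equiv.sum_comp (Equiv.addRight e) (fun x => iw (g (c + (x + x))) (g (d + (x + x))))

lemma EE_neg (c d : G) : EE g (-c) (-d) = EE g c d :=
  calc EE g (-c) (-d) = ∑ x : G, iw (g (c + (-x + -x))) (g (d + (-x + -x))) :=
        Finset.sum_congr rfl fun x _ => by
          rw [show (-c + (x + x) : G) = -(c + (-x + -x)) by abel,
            show (-d + (x + x) : G) = -(d + (-x + -x)) by abel, hg, hg]
    _ = EE g c d :=
        Equiv.sum_comp (Equiv.neg G) (fun x => iw (g (c + (x + x))) (g (d + (x + x))))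

omit hg in
lemma KM_def (c : G) : ∑ x : G, g (c + (x + x)) = KM g c := rfl

omit hg in
lemma EE_def (c d : G) : ∑ x : G, iw (g (c + (x + x))) (g (d + (x + x))) = EE g c d := rfl

omit hg in
lemma iw_nsmul_left (n : ℕ) (u v : M) : iw (n • u) v = n • iw u v := by
  unfold iw; rw [map_nsmul, smul_mul_assoc]

omit hg in
lemma iw_nsmul_right (n : ℕ) (u v : M) : iw u (n • v) = n • iw u v := by
  unfold iw; rw [map_nsmul, mul_smul_comm]

omit hg in
lemma KM_ab (a b : G) : KM g (b - a) = KM g (a + b) := by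
  have h := KM_shift g (b - a) a
  rw [show (b - a + (a + a) : G) = a + b by abel] at h
  exact h.symm

lemma KM_ab' (a b : G) : KM g (a - b) = KM g (a + b) := by
  have h := KM_neg g hg (b - a)
  rw [show (-(b - a) : G) = a - b by abel] at h
  rw [h, KM_ab g a b]

lemma EE1 (a b : G) : EE g (a + b) b = EE g (b - a) b := by
  have h1 := EE_shift g (a - b) (-b) b
  rw [show (a - b + (b + b) : G) = a + b by abel, show (-b + (b + b) : G) = b by abel] at h1
  have h2 := EE_neg g hg (b - a) b
  rw [show (-(b - a) : G) = a - b by abel] at h2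
  exact h1.trans h2

lemma EE3 (a b : G) : EE g (a - b) a = - EE g (-a) (b - a) := by
  have h1 := EE_neg g hg a (a - b)
  rw [show (-(a - b) : G) = b - a by abel] at h1
  rw [h1]
  exact EE_swap g (a - b) a

lemma EE2 (a b : G) : EE g (a + b) a = - EE g (-a) (b - a) := by
  have h1 := EE_shift g (b - a) (-a) a
  rw [show (b - a + (a + a) : G) = a + b by abel, show (-a + (a + a) : G) = a by abel] at h1
  have h2 := EE_neg g hg (a - b) a
  rw [show (-(a - b) : G) = b - a by abel] at h2
  rw [h1, h2, EE3 g hg a b]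

omit hg in
lemma EE5 (a b : G) : EE g (-a) b = - EE g b (-a) := EE_swap g (-a) b

lemma EE4 (a b : G) : EE g (a + (b + b)) b = - EE g b (-a) := by
  have h1 := EE_shift g a (-b) b
  rw [show (-b + (b + b) : G) = b by abel] at h1
  have h2 := EE_neg g hg (-a) b
  rw [show (-(-a) : G) = a by abel] at h2
  rw [h1, h2]
  exact EE5 g a b

lemma phiT_pointwise (a b x : G) :
    phiA g x (a - x) (b + x) =
      triA (g (b + (x + x)) + g b) (g a + g (-a + (x + x)))
        (g (a + b) + g ((b - a) + (x + x))) := by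
  unfold phiA hM
  rw [show (b + x + x : G) = b + (x + x) by abel, show (b + x - x : G) = b by abel,
    show (a - x + x : G) = a by abel,
    show (a - x - x : G) = -(-a + (x + x)) by abel, hg (-a + (x + x)),
    show (b + x + (a - x) : G) = a + b by abel,
    show (b + x - (a - x) : G) = (b - a) + (x + x) by abel]

lemma T_eq (a b : G) : ∑ x : G, phiA g x (a - x) (b + x) =
    (Fintype.card G : ℚ) •
        (iw (g b) (g a) + iw (g a) (g (a + b)) + iw (g (a + b)) (g b))
      + (iw (KM g b) (g a) + iw (g b) (KM g a)
        + iw (g a) (KM g (a + b)) + iw (KM g a) (g (a + b))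
        + iw (g (a + b)) (KM g b) + iw (KM g (a + b)) (g b))
      + (EE g b (-a) + EE g (-a) (b - a) + EE g (b - a) b) := by
  rw [Finset.sum_congr rfl fun x _ => phiT_pointwise g hg a b x]
  unfold triA
  simp only [iw_add_add, Finset.sum_add_distrib]
  simp only [sum_iw_left, sum_iw_right, Finset.sum_const, Finset.card_univ, smul_add,
    iw_nsmul_left, iw_nsmul_right]
  simp only [KM_def, EE_def]
  rw [KM_neg g hg a, KM_ab g a b]
  simp only [← Nat.cast_smul_eq_nsmul ℚ]
  module

omit hg in
lemma phi0_pointwise (c d x : G) :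
    phiA g 0 c (d + (x + x)) =
      triA (g (d + (x + x)) + g (d + (x + x))) (g c + g c)
        (g ((d + c) + (x + x)) + g ((d - c) + (x + x))) := by
  unfold phiA hM
  rw [add_zero, add_zero, sub_zero, sub_zero,
    show (d + (x + x) + c : G) = (d + c) + (x + x) by abel,
    show (d + (x + x) - c : G) = (d - c) + (x + x) by abel]

lemma sum_phiA0' (c d : G) : ∑ x : G, phiA g 0 c (d + (x + x)) =
    (4 : ℚ) • iw (KM g d) (g c) + (2 : ℚ) • iw (g c) (KM g (d + c))
      + (2 : ℚ) • iw (g c) (KM g (d - c))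
      + (2 : ℚ) • EE g (d + c) d + (2 : ℚ) • EE g (d - c) d := by
  rw [Finset.sum_congr rfl fun x _ => phi0_pointwise g c d x]
  unfold triA
  simp only [iw_add_add, Finset.sum_add_distrib]
  simp only [sum_iw_left, sum_iw_right]
  simp only [KM_def, EE_def]
  module

end Manin3Aux

/-- Theorem 4.2 (eq. "manin3") of Brunault, *On the K₄ group of modular curves*,
in abstract form: the triangulation of the Manin 3-term relation in K₂. -/
theorem manin3_triangulation {M : Type*} [AddCommGroup M] [Module ℚ M]
    {G : Type*} [AddCommGroup G] [Fintype G]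
    (g : G → M) (hg : ∀ x : G, g (-x) = g x) (a b : G) :
    psi ℚ g a b =
      ((Fintype.card G : ℚ))⁻¹ • ∑ x : G, delta ℚ g 0 x (a - x) (b + x)
        + (4 * (Fintype.card G : ℚ) ^ 2)⁻¹ •
            ∑ x : G, ∑ y : G,
              (delta ℚ g 0 a (b + 2 • x) y - delta ℚ g 0 b (a + 2 • x) y
                - delta ℚ g 0 (a + b) (b + 2 • x) y) := by
  classical
  have hn : ((Fintype.card G : ℚ)) ≠ 0 := Nat.cast_ne_zero.mpr Fintype.card_ne_zero
  apply Subtype.ext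
  simp only [Submodule.coe_add, SetLike.val_smul, AddSubmonoidClass.coe_finset_sum,
    AddSubgroupClass.coe_sub]
  simp only [Manin3Aux.psi_val g hg, Manin3Aux.delta_val g]
  simp only [two_nsmul]
  rw [Manin3Aux.sum_delta1 g hg a b, Manin3Aux.T_eq g hg a b]
  have hy : ∀ x : G,
      ∑ y : G, (Manin3Aux.deltaA g 0 a (b + (x + x)) y - Manin3Aux.deltaA g 0 b (a + (x + x)) y
          - Manin3Aux.deltaA g 0 (a + b) (b + (x + x)) y)
        = (Fintype.card G : ℚ) • (Manin3Aux.phiA g 0 a (b + (x + x))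
            - Manin3Aux.phiA g 0 b (a + (x + x)) - Manin3Aux.phiA g 0 (a + b) (b + (x + x))) :=
    fun x => by
      rw [Finset.sum_sub_distrib, Finset.sum_sub_distrib, Manin3Aux.sum_delta_y g hg a _,
        Manin3Aux.sum_delta_y g hg b _, Manin3Aux.sum_delta_y g hg (a + b) _, smul_sub, smul_sub]
  rw [Finset.sum_congr rfl fun x _ => hy x, ← Finset.smul_sum,
    Finset.sum_sub_distrib, Finset.sum_sub_distrib,
    Manin3Aux.sum_phiA0' g hg a b, Manin3Aux.sum_phiA0' g hg b a,
    Manin3Aux.sum_phiA0' g hg (a + b) b]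
  rw [show (b + a : G) = a + b from add_comm b a,
    show (b + (a + b) : G) = a + (b + b) by abel,
    show (b - (a + b) : G) = -a by abel]
  rw [Manin3Aux.KM_ab g a b, Manin3Aux.KM_ab' g hg a b, Manin3Aux.KM_neg g hg a,
    Manin3Aux.KM_shift g a b]
  rw [Manin3Aux.EE1 g hg a b, Manin3Aux.EE2 g hg a b, Manin3Aux.EE3 g hg a b,
    Manin3Aux.EE4 g hg a b, Manin3Aux.EE5 g a b]
  unfold Manin3Aux.psiA
  rw [Manin3Aux.iw_anticomm (g b) (g a), Manin3Aux.iw_anticomm (g (a + b)) (g a),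
    Manin3Aux.iw_anticomm (g (a + b)) (g b),
    Manin3Aux.iw_anticomm (Manin3Aux.KM g b) (g a),
    Manin3Aux.iw_anticomm (Manin3Aux.KM g a) (g (a + b)),
    Manin3Aux.iw_anticomm (Manin3Aux.KM g (a + b)) (g b),
    Manin3Aux.iw_anticomm (Manin3Aux.KM g a) (g b),
    Manin3Aux.iw_anticomm (Manin3Aux.KM g b) (g (a + b))]
  match_scalars <;> field_simp <;> ring
end

section
/- Let G be a finite abelian group of odd order and a, b ∈ G. Then in ⋀[ℚ]² M one has |G| · ψ(a,b) = Σ_{x∈G} δ(0, x, a−x, b+x). (This is the abstract form of the odd-order case of the paper's triangulation theorem, equation (eq manin3 odd).) -/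
section WedgeLemmas
variable {M : Type*} [AddCommGroup M] [Module ℚ M]

lemma wedge_coe (u v : M) :
    (wedge ℚ u v : ExteriorAlgebra ℚ M)
      = ExteriorAlgebra.ι ℚ u * ExteriorAlgebra.ι ℚ v := by
  simp [wedge, ExteriorAlgebra.ιMulti_apply, List.ofFn_succ]

lemma wedge_add_left (u u' v : M) :
    wedge ℚ (u + u') v = wedge ℚ u v + wedge ℚ u' v := by
  rw [Subtype.ext_iff]
  simp [wedge_coe, add_mul]

lemma wedge_add_right (u v v' : M) :
    wedge ℚ u (v + v') = wedge ℚ u v + wedge ℚ u v' := by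
  rw [Subtype.ext_iff]
  simp [wedge_coe, mul_add]

lemma wedge_zero_left (v : M) : wedge ℚ (0 : M) v = 0 := by
  rw [Subtype.ext_iff]
  simp [wedge_coe]

lemma wedge_self (u : M) : wedge ℚ u u = 0 := by
  rw [Subtype.ext_iff]
  simp [wedge_coe, ExteriorAlgebra.ι_sq_zero]

lemma wedge_skew (u v : M) : wedge ℚ u v = - wedge ℚ v u := by
  have h := wedge_self (u + v)
  rw [wedge_add_left, wedge_add_right, wedge_add_right, wedge_self, wedge_self] at h
  rw [zero_add, add_zero] at h
  exact eq_neg_of_add_eq_zero_left h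

end WedgeLemmas

section SumLemmas
set_option linter.unusedSectionVars false
variable {M : Type*} [AddCommGroup M] [Module ℚ M]
variable {G : Type*} [AddCommGroup G] [Fintype G]

lemma sum_wedge_left {ι : Type*} (s : Finset ι) (f : ι → M) (m : M) :
    ∑ x ∈ s, wedge ℚ (f x) m = wedge ℚ (∑ x ∈ s, f x) m := by
  induction s using Finset.cons_induction with
  | empty => simp [wedge_zero_left]
  | cons a s ha ih => simp [Finset.sum_cons, ih, wedge_add_left]

lemma sum_wedge_right {ι : Type*} (s : Finset ι) (f : ι → M) (m : M) :
    ∑ x ∈ s, wedge ℚ m (f x) = wedge ℚ m (∑ x ∈ s, f x) := by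
  induction s using Finset.cons_induction with
  | empty =>
    simp only [Finset.sum_empty]
    rw [wedge_skew, wedge_zero_left, neg_zero]
  | cons a s ha ih => simp [Finset.sum_cons, ih, wedge_add_right]

lemma sum_wedge_self_cancel (σ : G ≃ G) (f₁ f₂ : G → M)
    (h1 : ∀ x, f₂ (σ x) = f₁ x) (h2 : ∀ x, f₁ (σ x) = f₂ x) :
    ∑ x : G, wedge ℚ (f₁ x) (f₂ x) = 0 := by
  have hs : ∑ x : G, wedge ℚ (f₁ x) (f₂ x) = ∑ x : G, wedge ℚ (f₂ x) (f₁ x) := by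
    rw [← Equiv.sum_comp σ (fun x => wedge ℚ (f₁ x) (f₂ x))]
    exact Finset.sum_congr rfl fun x _ => by rw [h1, h2]
  have hneg : ∑ x : G, wedge ℚ (f₂ x) (f₁ x) = - ∑ x : G, wedge ℚ (f₁ x) (f₂ x) := by
    rw [← Finset.sum_neg_distrib]
    exact Finset.sum_congr rfl fun x _ => wedge_skew _ _
  have h2s : (2 : ℚ) • (∑ x : G, wedge ℚ (f₁ x) (f₂ x)) = 0 := by
    rw [two_smul]
    nth_rewrite 2 [hs]
    rw [hneg, add_neg_cancel]
  have := smul_eq_zero.mp h2s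
  simpa using this

lemma sum_wedge_pair_cancel (σ : G ≃ G) (f₁ f₂ f₃ f₄ : G → M)
    (h3 : ∀ x, f₃ x = f₂ (σ x)) (h4 : ∀ x, f₄ x = f₁ (σ x)) :
    (∑ x : G, wedge ℚ (f₁ x) (f₂ x)) + (∑ x : G, wedge ℚ (f₃ x) (f₄ x)) = 0 := by
  have hs : ∑ x : G, wedge ℚ (f₃ x) (f₄ x) = ∑ x : G, wedge ℚ (f₂ x) (f₁ x) := by
    rw [← Equiv.sum_comp σ (fun x => wedge ℚ (f₂ x) (f₁ x))]
    exact Finset.sum_congr rfl fun x _ => by rw [h3, h4]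
  have hneg : ∑ x : G, wedge ℚ (f₂ x) (f₁ x) = - ∑ x : G, wedge ℚ (f₁ x) (f₂ x) := by
    rw [← Finset.sum_neg_distrib]
    exact Finset.sum_congr rfl fun x _ => wedge_skew _ _
  rw [hs, hneg, add_neg_cancel]

lemma sum_wedge_const_cancel (m : M) (f₁ f₂ : G → M)
    (h : ∑ x : G, f₁ x = ∑ x : G, f₂ x) :
    (∑ x : G, wedge ℚ (f₁ x) m) + (∑ x : G, wedge ℚ m (f₂ x)) = 0 := by
  rw [sum_wedge_left, sum_wedge_right, h, wedge_skew, neg_add_cancel]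

end SumLemmas

section DoubleEquiv
variable (G : Type*) [AddCommGroup G]

def doubleEquiv (k : ℕ) (h : ∀ y : G, (k + 1) • y + (k + 1) • y = y) : G ≃ G where
  toFun := fun x => x + x
  invFun := fun y => (k + 1) • y
  left_inv := fun x => by simp only []; rw [smul_add]; exact h x
  right_inv := fun y => h y

@[simp] lemma doubleEquiv_apply (k : ℕ) (h : ∀ y : G, (k + 1) • y + (k + 1) • y = y) (x : G) :
    doubleEquiv G k h x = x + x := rfl

end DoubleEquiv

section Key
variable {M : Type*} [AddCommGroup M] [Module ℚ M]
variable {G : Type*} [AddCommGroup G]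

lemma key_expand (g : G → M) (hg : ∀ x : G, g (-x) = g x) (a b x : G) :
    delta ℚ g 0 x (a - x) (b + x) =
      (wedge ℚ (g a) (g b) + wedge ℚ (g b) (g (a + b)) + wedge ℚ (g (a + b)) (g a))
      + (4 • wedge ℚ (g (a - x)) (g x) + 4 • wedge ℚ (g (b + x)) (g (a - x))
          + 4 • wedge ℚ (g x) (g (b + x)))
      + (2 • wedge ℚ (g x) (g a) + 2 • wedge ℚ (g a) (g (a - x)))
      + (2 • wedge ℚ (g x) (g (a - x - x)) + 2 • wedge ℚ (g (a - x - x)) (g (a - x)))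
      + (2 • wedge ℚ (g (a - x)) (g (b - a + x + x))
          + 2 • wedge ℚ (g (b - a + x + x)) (g (b + x)))
      + (2 • wedge ℚ (g (a - x)) (g (a + b)) + 2 • wedge ℚ (g (a + b)) (g (b + x)))
      + (2 • wedge ℚ (g (b + x + x)) (g x) + 2 • wedge ℚ (g (b + x)) (g (b + x + x)))
      + (2 • wedge ℚ (g (b + x)) (g b) + 2 • wedge ℚ (g b) (g x))
      + wedge ℚ (g (b + x + x)) (g (b - a + x + x))
      + wedge ℚ (g (b - a + x + x)) (g (a - x - x))
      + wedge ℚ (g (a - x - x)) (g (b + x + x))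
      + (wedge ℚ (g (b + x + x)) (g (a + b)) + wedge ℚ (g (a + b)) (g (a - x - x)))
      + (wedge ℚ (g (b - a + x + x)) (g a) + wedge ℚ (g a) (g (b + x + x)))
      + (wedge ℚ (g (a - x - x)) (g b) + wedge ℚ (g b) (g (b - a + x + x))) := by
  have geq : ∀ u v : G, u = v → g u = g v := fun u v h => by rw [h]
  have gneg : ∀ u v : G, u = -v → g u = g v := fun u v h => by rw [h, hg]
  unfold delta phi
  rw [geq (a - x + 0) (a - x) (by abel), geq (a - x - 0) (a - x) (by abel),
    geq (x + 0) x (by abel), geq (x - 0) x (by abel),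
    geq (a - x + x) a (by abel),
    geq (0 + (a - x)) (a - x) (by abel), gneg (0 - (a - x)) (a - x) (by abel),
    geq (b + x + (a - x)) (a + b) (by abel),
    geq (b + x - (a - x)) (b - a + x + x) (by abel),
    geq (0 + (b + x)) (b + x) (by abel), gneg (0 - (b + x)) (b + x) (by abel),
    geq (b + x - x) b (by abel),
    geq (0 + x) x (by abel), gneg (0 - x) x (by abel),
    geq (b + x + 0) (b + x) (by abel), geq (b + x - 0) (b + x) (by abel),
    geq (x + (b + x)) (b + x + x) (by abel), gneg (x - (b + x)) b (by abel),
    geq (a - x + (b + x)) (a + b) (by abel),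
    gneg (a - x - (b + x)) (b - a + x + x) (by abel),
    geq (x + (a - x)) a (by abel), gneg (x - (a - x)) (a - x - x) (by abel)]
  simp only [wedge_add_left, wedge_add_right]
  abel

end Key

/-- Theorem 4.2 (eq. "manin3 odd") of Brunault, *On the K₄ group of modular curves*:
the triangulation of the Manin 3-term relation in K₂ for a group of odd order. -/
theorem manin3_triangulation_odd {M : Type*} [AddCommGroup M] [Module ℚ M]
    {G : Type*} [AddCommGroup G] [Fintype G] (hodd : Odd (Fintype.card G))
    (g : G → M) (hg : ∀ x : G, g (-x) = g x) (a b : G) :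
    (Fintype.card G : ℚ) • psi ℚ g a b = ∑ x : G, delta ℚ g 0 x (a - x) (b + x) := by
  have geq : ∀ u v : G, u = v → g u = g v := fun u v h => by rw [h]
  have gneg : ∀ u v : G, u = -v → g u = g v := fun u v h => by rw [h, hg]
  obtain ⟨k, hk⟩ := hodd
  have hcard : ∀ y : G, Fintype.card G • y = 0 := fun y => card_nsmul_eq_zero
  have hhalf : ∀ y : G, (k + 1) • y + (k + 1) • y = y := by
    intro y
    rw [← add_nsmul, show k + 1 + (k + 1) = Fintype.card G + 1 by omega, succ_nsmul, hcard,
      zero_add]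
  set e2 : G ≃ G := doubleEquiv G k hhalf with he2
  -- reindexing facts for sums of `g`
  have s2 : ∑ x : G, g (a - x) = ∑ x : G, g x := by
    rw [← Equiv.sum_comp (Equiv.subLeft a) g]
    exact Finset.sum_congr rfl fun x _ => by simp only [Equiv.subLeft_apply]
  have s3 : ∑ x : G, g (b + x) = ∑ x : G, g x := by
    rw [← Equiv.sum_comp (Equiv.addLeft b) g]
    exact Finset.sum_congr rfl fun x _ => by simp only [Equiv.coe_addLeft]
  have s4 : ∑ x : G, g (a - x - x) = ∑ x : G, g x := by
    rw [← Equiv.sum_comp (e2.trans (Equiv.subLeft a)) g]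
    refine Finset.sum_congr rfl fun x _ => ?_
    simp only [Equiv.trans_apply, Equiv.subLeft_apply, he2, doubleEquiv_apply]
    exact geq _ _ (by abel)
  have s5 : ∑ x : G, g (b + x + x) = ∑ x : G, g x := by
    rw [← Equiv.sum_comp (e2.trans (Equiv.addLeft b)) g]
    refine Finset.sum_congr rfl fun x _ => ?_
    simp only [Equiv.trans_apply, Equiv.coe_addLeft, he2, doubleEquiv_apply]
    exact geq _ _ (by abel)
  have s6 : ∑ x : G, g (b - a + x + x) = ∑ x : G, g x := by
    rw [← Equiv.sum_comp (e2.trans (Equiv.addLeft (b - a))) g]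
    refine Finset.sum_congr rfl fun x _ => ?_
    simp only [Equiv.trans_apply, Equiv.coe_addLeft, he2, doubleEquiv_apply]
    exact geq _ _ (by abel)
  -- the twelve vanishing sums
  have hZ1 : ∑ x : G, wedge ℚ (g (a - x)) (g x) = 0 :=
    sum_wedge_self_cancel (Equiv.subLeft a) (fun x => g (a - x)) (fun x => g x)
      (fun x => by simp only [Equiv.subLeft_apply])
      (fun x => by simp only [Equiv.subLeft_apply]; exact geq _ _ (by abel))
  have hZ2 : ∑ x : G, wedge ℚ (g (b + x)) (g (a - x)) = 0 :=
    sum_wedge_self_cancel (Equiv.subLeft (a - b)) (fun x => g (b + x)) (fun x => g (a - x))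
      (fun x => by simp only [Equiv.subLeft_apply]; exact geq _ _ (by abel))
      (fun x => by simp only [Equiv.subLeft_apply]; exact geq _ _ (by abel))
  have hZ3 : ∑ x : G, wedge ℚ (g x) (g (b + x)) = 0 :=
    sum_wedge_self_cancel (Equiv.subLeft (-b)) (fun x => g x) (fun x => g (b + x))
      (fun x => by simp only [Equiv.subLeft_apply]; exact gneg _ _ (by abel))
      (fun x => by simp only [Equiv.subLeft_apply]; exact gneg _ _ (by abel))
  have hZ10 : ∑ x : G, wedge ℚ (g (b + x + x)) (g (b - a + x + x)) = 0 := by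
    set c : G := (k + 1) • (a - b - b) with hc
    have hcc : c + c = a - b - b := hhalf _
    refine sum_wedge_self_cancel (Equiv.subLeft c) (fun x => g (b + x + x))
      (fun x => g (b - a + x + x)) (fun x => ?_) (fun x => ?_)
    · simp only [Equiv.subLeft_apply]
      refine gneg _ _ ?_
      rw [show b - a + (c - x) + (c - x) = c + c + (b - a - x - x) by abel, hcc]; abel
    · simp only [Equiv.subLeft_apply]
      refine gneg _ _ ?_
      rw [show b + (c - x) + (c - x) = c + c + (b - x - x) by abel, hcc]; abel
  have hZ11 : ∑ x : G, wedge ℚ (g (b - a + x + x)) (g (a - x - x)) = 0 := by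
    set c : G := (k + 1) • (a + a - b) with hc
    have hcc : c + c = a + a - b := hhalf _
    refine sum_wedge_self_cancel (Equiv.subLeft c) (fun x => g (b - a + x + x))
      (fun x => g (a - x - x)) (fun x => ?_) (fun x => ?_)
    · simp only [Equiv.subLeft_apply]
      refine geq _ _ ?_
      rw [show a - (c - x) - (c - x) = a + x + x - (c + c) by abel, hcc]; abel
    · simp only [Equiv.subLeft_apply]
      refine geq _ _ ?_
      rw [show b - a + (c - x) + (c - x) = c + c + (b - a - x - x) by abel, hcc]; abel
  have hZ12 : ∑ x : G, wedge ℚ (g (a - x - x)) (g (b + x + x)) = 0 := by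
    set c : G := (k + 1) • (a - b) with hc
    have hcc : c + c = a - b := hhalf _
    refine sum_wedge_self_cancel (Equiv.subLeft c) (fun x => g (a - x - x))
      (fun x => g (b + x + x)) (fun x => ?_) (fun x => ?_)
    · simp only [Equiv.subLeft_apply]
      refine geq _ _ ?_
      rw [show b + (c - x) + (c - x) = c + c + (b - x - x) by abel, hcc]; abel
    · simp only [Equiv.subLeft_apply]
      refine geq _ _ ?_
      rw [show a - (c - x) - (c - x) = a + x + x - (c + c) by abel, hcc]; abel
  have hZ5 : (∑ x : G, wedge ℚ (g x) (g (a - x - x)))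
      + (∑ x : G, wedge ℚ (g (a - x - x)) (g (a - x))) = 0 :=
    sum_wedge_pair_cancel (Equiv.subLeft a) (fun x => g x) (fun x => g (a - x - x))
      (fun x => g (a - x - x)) (fun x => g (a - x))
      (fun x => by simp only [Equiv.subLeft_apply]; exact (gneg _ _ (by abel)).symm)
      (fun x => by simp only [Equiv.subLeft_apply])
  have hZ6 : (∑ x : G, wedge ℚ (g (a - x)) (g (b - a + x + x)))
      + (∑ x : G, wedge ℚ (g (b - a + x + x)) (g (b + x))) = 0 :=
    sum_wedge_pair_cancel (Equiv.subLeft (a - b)) (fun x => g (a - x))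
      (fun x => g (b - a + x + x)) (fun x => g (b - a + x + x)) (fun x => g (b + x))
      (fun x => by simp only [Equiv.subLeft_apply]; exact (gneg _ _ (by abel)).symm)
      (fun x => by simp only [Equiv.subLeft_apply]; exact (geq _ _ (by abel)).symm)
  have hZ8 : (∑ x : G, wedge ℚ (g (b + x + x)) (g x))
      + (∑ x : G, wedge ℚ (g (b + x)) (g (b + x + x))) = 0 :=
    sum_wedge_pair_cancel (Equiv.subLeft (-b)) (fun x => g (b + x + x)) (fun x => g x)
      (fun x => g (b + x)) (fun x => g (b + x + x))
      (fun x => by simp only [Equiv.subLeft_apply]; exact (gneg _ _ (by abel)).symm)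
      (fun x => by simp only [Equiv.subLeft_apply]; exact (gneg _ _ (by abel)).symm)
  have hZ4 : (∑ x : G, wedge ℚ (g x) (g a)) + (∑ x : G, wedge ℚ (g a) (g (a - x))) = 0 :=
    sum_wedge_const_cancel (g a) (fun x => g x) (fun x => g (a - x)) s2.symm
  have hZ7 : (∑ x : G, wedge ℚ (g (a - x)) (g (a + b)))
      + (∑ x : G, wedge ℚ (g (a + b)) (g (b + x))) = 0 :=
    sum_wedge_const_cancel (g (a + b)) (fun x => g (a - x)) (fun x => g (b + x))
      (s2.trans s3.symm)
  have hZ9 : (∑ x : G, wedge ℚ (g (b + x)) (g b)) + (∑ x : G, wedge ℚ (g b) (g x)) = 0 :=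
    sum_wedge_const_cancel (g b) (fun x => g (b + x)) (fun x => g x) s3
  have hZ13 : (∑ x : G, wedge ℚ (g (b + x + x)) (g (a + b)))
      + (∑ x : G, wedge ℚ (g (a + b)) (g (a - x - x))) = 0 :=
    sum_wedge_const_cancel (g (a + b)) (fun x => g (b + x + x)) (fun x => g (a - x - x))
      (s5.trans s4.symm)
  have hZ14 : (∑ x : G, wedge ℚ (g (b - a + x + x)) (g a))
      + (∑ x : G, wedge ℚ (g a) (g (b + x + x))) = 0 :=
    sum_wedge_const_cancel (g a) (fun x => g (b - a + x + x)) (fun x => g (b + x + x))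
      (s6.trans s5.symm)
  have hZ15 : (∑ x : G, wedge ℚ (g (a - x - x)) (g b))
      + (∑ x : G, wedge ℚ (g b) (g (b - a + x + x))) = 0 :=
    sum_wedge_const_cancel (g b) (fun x => g (a - x - x)) (fun x => g (b - a + x + x))
      (s4.trans s6.symm)
  -- convert the pair facts into substitution form
  have hZ5' := eq_neg_of_add_eq_zero_right hZ5
  have hZ6' := eq_neg_of_add_eq_zero_right hZ6
  have hZ8' := eq_neg_of_add_eq_zero_right hZ8
  have hZ4' := eq_neg_of_add_eq_zero_right hZ4
  have hZ7' := eq_neg_of_add_eq_zero_right hZ7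
  have hZ9' := eq_neg_of_add_eq_zero_right hZ9
  have hZ13' := eq_neg_of_add_eq_zero_right hZ13
  have hZ14' := eq_neg_of_add_eq_zero_right hZ14
  have hZ15' := eq_neg_of_add_eq_zero_right hZ15
  -- expand the sum via the pointwise identity
  rw [Finset.sum_congr rfl fun x _ => key_expand g hg a b x]
  simp only [Finset.sum_add_distrib, ← Finset.smul_sum, Finset.sum_const, Finset.card_univ]
  rw [hZ1, hZ2, hZ3, hZ10, hZ11, hZ12, hZ5', hZ6', hZ8', hZ4', hZ7', hZ9', hZ13', hZ14', hZ15']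
  unfold psi
  rw [gneg (-a - b) (a + b) (by abel)]
  simp only [smul_add, Nat.cast_smul_eq_nsmul]
  abel
end

section
/- For all a, b, c, d ∈ G, the element δ(a,b,c,d) ∈ ⋀[ℤ]² A is totally antisymmetric in its four arguments, i.e. δ(b,a,c,d) = δ(a,c,b,d) = δ(a,b,d,c) = −δ(a,b,c,d); moreover δ(−a,−b,−c,−d) = δ(a,b,c,d). -/
lemma wedge_swap (R : Type*) [CommRing R] {M : Type*} [AddCommGroup M] [Module R M]
    (u v : M) : wedge R u v = - wedge R v u := by
  apply Subtype.ext
  show ExteriorAlgebra.ιMulti R 2 ![u, v] = -(ExteriorAlgebra.ιMulti R 2 ![v, u])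
  have h : ![v, u] = ![u, v] ∘ Equiv.swap (0 : Fin 2) 1 := by
    funext i; fin_cases i <;> rfl
  rw [h, AlternatingMap.map_swap _ _ (by decide : (0 : Fin 2) ≠ 1), neg_neg]

/-- The element `δ(a,b,c,d)` is totally antisymmetric in its four arguments and
invariant under negating all of them. -/
theorem delta_antisymm {A G : Type*} [AddCommGroup A] [AddCommGroup G]
    (g : G → A) (hg : ∀ x : G, g (-x) = g x) :
    (∀ a b c d : G, delta ℤ g b a c d = - delta ℤ g a b c d) ∧
    (∀ a b c d : G, delta ℤ g a c b d = - delta ℤ g a b c d) ∧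
    (∀ a b c d : G, delta ℤ g a b d c = - delta ℤ g a b c d) ∧
    (∀ a b c d : G, delta ℤ g (-a) (-b) (-c) (-d) = delta ℤ g a b c d) := by
  have hF : ∀ x y : G, g (x + y) + g (x - y) = g (y + x) + g (y - x) := by
    intro x y
    rw [add_comm x y, show x - y = -(y - x) by abel, hg]
  have T13 : ∀ u v w : A,
      wedge ℤ u v + wedge ℤ v w + wedge ℤ w u
        = -(wedge ℤ w v + wedge ℤ v u + wedge ℤ u w) := by
    intro u v w
    rw [wedge_swap ℤ u v, wedge_swap ℤ v w, wedge_swap ℤ w u]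
    abel
  have T12 : ∀ u v w : A,
      wedge ℤ u v + wedge ℤ v w + wedge ℤ w u
        = -(wedge ℤ v u + wedge ℤ u w + wedge ℤ w v) := by
    intro u v w
    rw [wedge_swap ℤ u v, wedge_swap ℤ v w, wedge_swap ℤ w u]
    abel
  refine ⟨?_, ?_, ?_, ?_⟩
  · intro a b c d
    simp only [delta, phi]
    rw [hF a b, hF a c, hF a d, hF b c, hF b d, hF c d]
    rw [T13 (g (c + b) + g (c - b)) (g (b + a) + g (b - a)) (g (c + a) + g (c - a)),
        T13 (g (c + b) + g (c - b)) (g (d + c) + g (d - c)) (g (d + b) + g (d - b)),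
        T13 (g (d + a) + g (d - a)) (g (b + a) + g (b - a)) (g (d + b) + g (d - b)),
        T13 (g (d + a) + g (d - a)) (g (d + c) + g (d - c)) (g (c + a) + g (c - a))]
    abel
  · intro a b c d
    simp only [delta, phi]
    rw [hF a b, hF a c, hF a d, hF b c, hF b d, hF c d]
    rw [T12 (g (b + a) + g (b - a)) (g (c + a) + g (c - a)) (g (c + b) + g (c - b)),
        T12 (g (b + a) + g (b - a)) (g (d + b) + g (d - b)) (g (d + a) + g (d - a)),
        T12 (g (d + c) + g (d - c)) (g (c + a) + g (c - a)) (g (d + a) + g (d - a)),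
        T12 (g (d + c) + g (d - c)) (g (d + b) + g (d - b)) (g (c + b) + g (c - b))]
    abel
  · intro a b c d
    simp only [delta, phi]
    rw [hF a b, hF a c, hF a d, hF b c, hF b d, hF c d]
    rw [T13 (g (d + a) + g (d - a)) (g (b + a) + g (b - a)) (g (d + b) + g (d - b)),
        T13 (g (d + a) + g (d - a)) (g (d + c) + g (d - c)) (g (c + a) + g (c - a)),
        T13 (g (c + b) + g (c - b)) (g (b + a) + g (b - a)) (g (c + a) + g (c - a)),
        T13 (g (c + b) + g (c - b)) (g (d + c) + g (d - c)) (g (d + b) + g (d - b))]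
    abel
  · intro a b c d
    have h1 : ∀ x y : G, g (-x + -y) = g (x + y) := fun x y => by
      rw [← neg_add, hg]
    have h2 : ∀ x y : G, g (-x - -y) = g (x - y) := fun x y => by
      rw [show -x - -y = -(x - y) by abel, hg]
    simp only [delta, phi, h1, h2]
end

section
/- Let G be a finite abelian group. For all α, β, z, t ∈ G one has 2 · ( Σ_{x∈G} δ(α+x, β+x, z, t) ) = 0 in ⋀[ℤ]² A. (This is the paper's Lemma 4.8: the sum equals its own negative under the substitution x ↦ −α−β−x.) -/
section Aux
variable {A G : Type*} [AddCommGroup A] [AddCommGroup G]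

lemma delta_neg_neg (g : G → A) (hg : ∀ x : G, g (-x) = g x) (a b c d : G) :
    delta ℤ g (-b) (-a) c d = - delta ℤ g a b c d := by
  set h : G → G → A := fun z x => g (z + x) + g (z - x) with hh
  have hsymm : ∀ z x, h z x = h x z := by
    intro z x
    simp only [hh]
    rw [add_comm z x, show x - z = -(z - x) by abel, hg]
  have heven : ∀ z x, h z (-x) = h z x := by
    intro z x
    simp only [hh]
    rw [show z + -x = z - x by abel, show z - -x = z + x by abel, add_comm]
  have hphi : ∀ x y z : G, phi ℤ g x y z
      = wedge ℤ (h z x) (h y x) + wedge ℤ (h y x) (h z y) + wedge ℤ (h z y) (h z x) :=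
    fun _ _ _ => rfl
  show phi ℤ g (-b) (-a) c + phi ℤ g c d (-b) + phi ℤ g (-a) (-b) d + phi ℤ g d c (-a)
      = -(phi ℤ g a b c + phi ℤ g c d a + phi ℤ g b a d + phi ℤ g d c b)
  rw [hphi, hphi, hphi, hphi, hphi, hphi, hphi, hphi]
  -- eliminate negated arguments
  rw [heven c b, heven c a, heven d b, heven d a,
      show h (-a) (-b) = h b a by rw [heven, hsymm, heven],
      show h (-b) (-a) = h b a by rw [heven, hsymm, heven, hsymm],
      show h (-b) c = h c b by rw [hsymm, heven],
      show h (-b) d = h d b by rw [hsymm, heven],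
      show h (-a) d = h d a by rw [hsymm, heven],
      show h (-a) c = h c a by rw [hsymm, heven],
      -- canonicalize symmetric pairs appearing in both orders
      hsymm b a, hsymm a c, hsymm a d, hsymm b d, hsymm b c, hsymm c d]
  -- flip every wedge on the left-hand side
  rw [wedge_swap ℤ (h c b) (h a b), wedge_swap ℤ (h a b) (h c a),
      wedge_swap ℤ (h c a) (h c b), wedge_swap ℤ (h c b) (h d c),
      wedge_swap ℤ (h d c) (h d b), wedge_swap ℤ (h d b) (h c b),
      wedge_swap ℤ (h d a) (h a b), wedge_swap ℤ (h a b) (h d b),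
      wedge_swap ℤ (h d b) (h d a), wedge_swap ℤ (h d a) (h d c),
      wedge_swap ℤ (h d c) (h c a), wedge_swap ℤ (h c a) (h d a)]
  abel

end Aux

/-- Lemma 4.8 of Brunault, *On the K₄ group of modular curves*:
`Σ_{x ∈ G} δ(α+x, β+x, z, t)` equals its own negative, hence is killed by 2. -/
theorem two_smul_sum_delta_eq_zero {A G : Type*} [AddCommGroup A] [AddCommGroup G] [Fintype G]
    (g : G → A) (hg : ∀ x : G, g (-x) = g x) (α β z t : G) :
    2 • ∑ x : G, delta ℤ g (α + x) (β + x) z t = 0 := by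
  have key : ∀ x : G, delta ℤ g (α + (-α - β - x)) (β + (-α - β - x)) z t
      = - delta ℤ g (α + x) (β + x) z t := fun x => by
    rw [show α + (-α - β - x) = -(β + x) by abel, show β + (-α - β - x) = -(α + x) by abel]
    exact delta_neg_neg g hg (α + x) (β + x) z t
  have hS : (∑ x : G, delta ℤ g (α + x) (β + x) z t)
      = - ∑ x : G, delta ℤ g (α + x) (β + x) z t := by
    rw [← Finset.sum_neg_distrib]
    exact Fintype.sum_equiv (Equiv.subLeft (-α - β)) _ _ fun x => by
      simpa [Equiv.subLeft, sub_eq_add_neg] using neg_eq_iff_eq_neg.mp (key x).symm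
  rw [two_smul]
  nth_rewrite 1 [hS]
  abel
end

section
/- The class 𝒫 is stable under differentiation: every φ ∈ 𝒫 is differentiable on (0,∞) and its derivative φ′ belongs to 𝒫. -/
/-!
Each inner series `∑ₙ cₙ e^{-2πny/N}` can be differentiated term by term on `(0, ∞)`:
multiplying the coefficients by `-2πn/N` preserves polynomial growth, and on `(y₀/2, ∞)` the
differentiated series is dominated by its absolutely convergent value at `y₀/2`. By the product
rule the derivative of `∑_{j ≤ J} y^j S_j(y)` is again an expansion of degree `J`, once the
coefficients above degree `J` (which do not enter the expansion) are set to zero. For the expansion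
of `φ(1/y)` the chain rule gives `φ'(1/y) = -y² · (φ(1/·))'(y)`, an expansion of degree `J + 2`.
-/

/-- A sequence of complex numbers has polynomial growth. -/
def PolyGrowth (c : ℕ → ℂ) : Prop :=
  ∃ (C : ℝ) (k : ℕ), 0 < C ∧ ∀ n : ℕ, ‖c n‖ ≤ C * (1 + n) ^ k

/-- The expansion `Σ_{j=0}^{J} y^j Σ_{n=0}^∞ a_n^{(j)} e^{-2πny/N}`. -/
noncomputable def expSum (N : ℕ) (J : ℕ) (a : ℕ → ℕ → ℂ) (y : ℝ) : ℂ :=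
  ∑ j ∈ Finset.range (J + 1),
    (y : ℂ) ^ j * ∑' n : ℕ, a j n * (Real.exp (-(2 * Real.pi * n * y / N)) : ℂ)

/-- Membership in the class `𝒫` of functions on `(0,∞)` (Definition 6.3 of the paper):
`φ(y)` and `φ(1/y)` both admit absolutely convergent expansions
`Σ_{j} y^j Σ_{n≥0} c_n^{(j)} e^{-2πny/N}` with coefficients of polynomial growth. -/
def MemP (N : ℕ) (φ : ℝ → ℂ) : Prop :=
  ∃ (jI j0 : ℕ) (a b : ℕ → ℕ → ℂ),
    (∀ j, PolyGrowth (a j)) ∧ (∀ j, PolyGrowth (b j)) ∧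
    (∀ y : ℝ, 0 < y →
      (∀ j, Summable fun n : ℕ => ‖a j n‖ * Real.exp (-(2 * Real.pi * n * y / N))) ∧
      (∀ j, Summable fun n : ℕ => ‖b j n‖ * Real.exp (-(2 * Real.pi * n * y / N))) ∧
      φ y = expSum N jI a y ∧ φ (1 / y) = expSum N j0 b y)

open Filter Finset Real Asymptotics

namespace PolyGrowth

variable {c d : ℕ → ℂ}

lemma zero : PolyGrowth 0 := ⟨1, 0, one_pos, by simp⟩

lemma add (hc : PolyGrowth c) (hd : PolyGrowth d) : PolyGrowth (c + d) := by
  obtain ⟨C, k, hC, hc⟩ := hc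
  obtain ⟨D, l, hD, hd⟩ := hd
  refine ⟨C + D, k + l, by positivity, fun n => ?_⟩
  have h1 : (1 : ℝ) ≤ 1 + n := by simp
  calc ‖c n + d n‖ ≤ ‖c n‖ + ‖d n‖ := norm_add_le _ _
    _ ≤ C * (1 + n) ^ k + D * (1 + n) ^ l := add_le_add (hc n) (hd n)
    _ ≤ C * (1 + n) ^ (k + l) + D * (1 + n) ^ (k + l) := by gcongr <;> omega
    _ = (C + D) * (1 + n) ^ (k + l) := by ring

lemma const_mul (z : ℂ) (hc : PolyGrowth c) : PolyGrowth fun n => z * c n := by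
  obtain ⟨C, k, hC, hc⟩ := hc
  refine ⟨(‖z‖ + 1) * C, k, by positivity, fun n => ?_⟩
  calc ‖z * c n‖ = ‖z‖ * ‖c n‖ := norm_mul _ _
    _ ≤ (‖z‖ + 1) * (C * (1 + n) ^ k) := by gcongr; exacts [by linarith, hc n]
    _ = (‖z‖ + 1) * C * (1 + n) ^ k := by ring

lemma neg (hc : PolyGrowth c) : PolyGrowth (-c) := by
  simpa [Pi.neg_def] using hc.const_mul (-1)

lemma natCast_mul (hc : PolyGrowth c) : PolyGrowth fun n => (n : ℂ) * c n := by
  obtain ⟨C, k, hC, hc⟩ := hc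
  refine ⟨C, k + 1, hC, fun n => ?_⟩
  calc ‖(n : ℂ) * c n‖ = n * ‖c n‖ := by simp
    _ ≤ (1 + n) * (C * (1 + n) ^ k) := by gcongr; exacts [by linarith, hc n]
    _ = C * (1 + n) ^ (k + 1) := by ring

lemma isBigO_pow (hc : PolyGrowth c) :
    ∃ k : ℕ, (fun n => ‖c n‖) =O[atTop] fun n => ((n ^ k : ℕ) : ℝ) := by
  obtain ⟨C, k, hC, hc⟩ := hc
  refine ⟨k, IsBigO.of_bound (C * 2 ^ k) ?_⟩
  filter_upwards [eventually_ge_atTop 1] with n hn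
  have hn : (1 : ℝ) ≤ n := by exact_mod_cast hn
  calc ‖‖c n‖‖ = ‖c n‖ := norm_norm _
    _ ≤ C * (1 + n) ^ k := hc n
    _ ≤ C * (2 * n) ^ k := by gcongr; linarith
    _ = C * 2 ^ k * ‖((n ^ k : ℕ) : ℝ)‖ := by
      rw [Real.norm_of_nonneg (by positivity)]; push_cast; ring

lemma summable_norm_mul_geometric (hc : PolyGrowth c) {r : ℝ} (hr₀ : 0 ≤ r) (hr₁ : r < 1) :
    Summable fun n => ‖c n‖ * r ^ n := by
  obtain ⟨k, hk⟩ := hc.isBigO_pow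
  have hr : ‖r‖ < 1 := by rwa [Real.norm_of_nonneg hr₀]
  exact (summable_norm_mul_geometric_of_norm_lt_one' (F := ℝ) hr hk).of_norm

lemma summable_norm_mul_exp {N : ℕ} (hN : 1 ≤ N) (hc : PolyGrowth c) {y : ℝ} (hy : 0 < y) :
    Summable fun n : ℕ => ‖c n‖ * Real.exp (-(2 * π * n * y / N)) := by
  have hN₀ : (0 : ℝ) < N := by exact_mod_cast hN
  have hexp : ∀ n : ℕ, Real.exp (-(2 * π * n * y / N)) = Real.exp (-(2 * π * y / N)) ^ n := by
    intro n; rw [← Real.exp_nat_mul]; ring_nf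
  simp_rw [hexp]
  exact hc.summable_norm_mul_geometric (Real.exp_nonneg _)
    (Real.exp_lt_one_iff.mpr (by simp only [neg_lt_zero]; positivity))

end PolyGrowth

noncomputable def expTerm (N n : ℕ) (y : ℝ) : ℂ := Real.exp (-(2 * π * n * y / N))

noncomputable def expSeries (N : ℕ) (c : ℕ → ℂ) (y : ℝ) : ℂ := ∑' n, c n * expTerm N n y

noncomputable def expDerivCoeff (N : ℕ) (c : ℕ → ℂ) (n : ℕ) : ℂ := -(2 * π * n / N) * c n

lemma expSum_eq_sum_expSeries (N J : ℕ) (a : ℕ → ℕ → ℂ) (y : ℝ) :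
    expSum N J a y = ∑ j ∈ range (J + 1), (y : ℂ) ^ j * expSeries N (a j) y := rfl

lemma norm_expTerm (N n : ℕ) (y : ℝ) : ‖expTerm N n y‖ = Real.exp (-(2 * π * n * y / N)) := by
  rw [expTerm, Complex.norm_real, Real.norm_of_nonneg (Real.exp_nonneg _)]

lemma antitone_norm_expTerm (N n : ℕ) : Antitone fun y => ‖expTerm N n y‖ := fun x y hxy => by
  simp only [norm_expTerm, Real.exp_le_exp, neg_le_neg_iff]
  gcongr

lemma hasDerivAt_expTerm (N n : ℕ) (y : ℝ) :
    HasDerivAt (expTerm N n) (-(2 * π * n / N) * expTerm N n y) y := by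
  have h : HasDerivAt (fun x : ℝ => -(2 * π * n * x / N)) (-(2 * π * n / N)) y := by
    simpa using (((hasDerivAt_id' y).const_mul (2 * π * n)).div_const N).fun_neg
  exact h.exp.ofReal_comp.congr_deriv (by rw [expTerm]; push_cast; ring)

namespace PolyGrowth

variable {c : ℕ → ℂ}

lemma expDerivCoeff (N : ℕ) (hc : PolyGrowth c) : PolyGrowth (expDerivCoeff N c) := by
  have h := hc.natCast_mul.const_mul (-(2 * π / N))
  convert h using 2 with n
  simp only [_root_.expDerivCoeff]; ring

lemma summable_expSeries {N : ℕ} (hN : 1 ≤ N) (hc : PolyGrowth c) {y : ℝ} (hy : 0 < y) :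
    Summable fun n => c n * expTerm N n y :=
  .of_norm <| by simpa only [norm_mul, norm_expTerm] using hc.summable_norm_mul_exp hN hy

lemma hasDerivAt_expSeries {N : ℕ} (hN : 1 ≤ N) (hc : PolyGrowth c) {y : ℝ} (hy : 0 < y) :
    HasDerivAt (expSeries N c) (expSeries N (_root_.expDerivCoeff N c) y) y := by
  have hbound := (hc.expDerivCoeff N).summable_norm_mul_exp hN (half_pos hy)
  simp only [← norm_expTerm] at hbound
  refine hasDerivAt_tsum_of_isPreconnected (g := fun n x => c n * expTerm N n x)
    (g' := fun n x => _root_.expDerivCoeff N c n * expTerm N n x) hbound isOpen_Ioi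
    isPreconnected_Ioi (fun n x _ => ?_) (fun n x hx => ?_) (half_lt_self hy)
    (hc.summable_expSeries hN hy) (half_lt_self hy)
  · refine ((hasDerivAt_expTerm N n x).const_mul (c n)).congr_deriv ?_
    simp only [_root_.expDerivCoeff]; ring
  · rw [norm_mul]
    exact mul_le_mul_of_nonneg_left (antitone_norm_expTerm N n hx.le) (norm_nonneg _)

end PolyGrowth

lemma expSeries_add {N : ℕ} {c d : ℕ → ℂ} {y : ℝ} (hc : Summable fun n => c n * expTerm N n y)
    (hd : Summable fun n => d n * expTerm N n y) :
    expSeries N (c + d) y = expSeries N c y + expSeries N d y := by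
  simp only [expSeries, Pi.add_apply, add_mul, hc.tsum_add hd]

lemma expSeries_const_mul (N : ℕ) (z : ℂ) (c : ℕ → ℂ) (y : ℝ) :
    expSeries N (fun n => z * c n) y = z * expSeries N c y := by
  simp only [expSeries, mul_assoc, tsum_mul_left]

lemma sum_range_natCast_mul_pow_pred {R : Type*} [CommSemiring R] (x : R) (S : ℕ → R) (J : ℕ)
    (hS : S (J + 1) = 0) :
    ∑ j ∈ range (J + 1), (j : R) * x ^ (j - 1) * S j =
      ∑ j ∈ range (J + 1), x ^ j * ((j + 1 : R) * S (j + 1)) := by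
  rw [sum_range_succ', sum_range_succ]
  simp only [hS, Nat.cast_zero, zero_mul, add_zero, mul_zero, Nat.add_sub_cancel, Nat.cast_succ]
  exact sum_congr rfl fun j _ => by ring

noncomputable def expSumDerivCoeff (N : ℕ) (c : ℕ → ℕ → ℂ) (j : ℕ) : ℕ → ℂ :=
  (fun n => (j + 1 : ℂ) * c (j + 1) n) + expDerivCoeff N (c j)

lemma PolyGrowth.expSumDerivCoeff (N : ℕ) {c : ℕ → ℕ → ℂ} (hc : ∀ j, PolyGrowth (c j))
    (j : ℕ) : PolyGrowth (expSumDerivCoeff N c j) :=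
  ((hc (j + 1)).const_mul _).add ((hc j).expDerivCoeff N)

lemma hasDerivAt_expSum {N J : ℕ} (hN : 1 ≤ N) {c : ℕ → ℕ → ℂ} (hc : ∀ j, PolyGrowth (c j))
    (hJ : c (J + 1) = 0) {y : ℝ} (hy : 0 < y) :
    HasDerivAt (expSum N J c) (expSum N J (expSumDerivCoeff N c) y) y := by
  have hterm : ∀ j, HasDerivAt (fun x : ℝ => (x : ℂ) ^ j * expSeries N (c j) x)
      ((j : ℂ) * (y : ℂ) ^ (j - 1) * expSeries N (c j) y +
        (y : ℂ) ^ j * expSeries N (expDerivCoeff N (c j)) y) y :=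
    fun j => (hasDerivAt_pow j (y : ℂ)).comp_ofReal.mul ((hc j).hasDerivAt_expSeries hN hy)
  refine (HasDerivAt.fun_sum fun j _ => hterm j).congr_deriv ?_
  rw [sum_add_distrib, sum_range_natCast_mul_pow_pred _ _ _ (by simp [hJ, expSeries]),
    ← sum_add_distrib, expSum_eq_sum_expSeries]
  refine sum_congr rfl fun j _ => ?_
  rw [expSumDerivCoeff, expSeries_add (((hc (j + 1)).const_mul _).summable_expSeries hN hy)
    (((hc j).expDerivCoeff N).summable_expSeries hN hy), expSeries_const_mul]
  ring

noncomputable def truncCoeff (J : ℕ) (c : ℕ → ℕ → ℂ) (j : ℕ) : ℕ → ℂ :=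
  if j ≤ J then c j else 0

noncomputable def shiftCoeff (k : ℕ) (c : ℕ → ℕ → ℂ) (j : ℕ) : ℕ → ℂ :=
  if k ≤ j then c (j - k) else 0

section Coefficients

variable {c : ℕ → ℕ → ℂ}

lemma PolyGrowth.truncCoeff (J : ℕ) (hc : ∀ j, PolyGrowth (c j)) (j : ℕ) :
    PolyGrowth (truncCoeff J c j) := by
  unfold _root_.truncCoeff; split_ifs
  exacts [hc j, PolyGrowth.zero]

lemma PolyGrowth.shiftCoeff (k : ℕ) (hc : ∀ j, PolyGrowth (c j)) (j : ℕ) :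
    PolyGrowth (shiftCoeff k c j) := by
  unfold _root_.shiftCoeff; split_ifs
  exacts [hc (j - k), PolyGrowth.zero]

lemma truncCoeff_succ (J : ℕ) (c : ℕ → ℕ → ℂ) : truncCoeff J c (J + 1) = 0 := by
  simp [truncCoeff]

lemma expSum_truncCoeff (N J : ℕ) (c : ℕ → ℕ → ℂ) :
    expSum N J (truncCoeff J c) = expSum N J c := by
  ext y
  refine sum_congr rfl fun j hj => ?_
  rw [truncCoeff, if_pos (Nat.lt_succ_iff.mp (mem_range.mp hj))]

lemma expSum_shiftCoeff (N J k : ℕ) (c : ℕ → ℕ → ℂ) (y : ℝ) :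
    expSum N (J + k) (shiftCoeff k c) y = (y : ℂ) ^ k * expSum N J c y := by
  have hlow : ∀ j ∈ range k, (y : ℂ) ^ j * expSeries N (shiftCoeff k c j) y = 0 :=
    fun j hj => by simp [shiftCoeff, (mem_range.mp hj).not_ge, expSeries]
  rw [expSum_eq_sum_expSeries, show J + k + 1 = k + (J + 1) by omega, sum_range_add,
    sum_eq_zero hlow, zero_add, expSum_eq_sum_expSeries, mul_sum]
  refine sum_congr rfl fun j _ => ?_
  simp only [shiftCoeff, Nat.le_add_right, if_true, Nat.add_sub_cancel_left, pow_add,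
    mul_assoc]

lemma expSum_neg (N J : ℕ) (c : ℕ → ℕ → ℂ) (y : ℝ) :
    expSum N J (-c) y = -expSum N J c y := by
  simp only [expSum_eq_sum_expSeries, expSeries, Pi.neg_apply, neg_mul, tsum_neg, mul_neg,
    sum_neg_distrib]

end Coefficients

lemma deriv_one_div_eq_of_hasDerivAt_comp {E : Type*} [NormedAddCommGroup E] [NormedSpace ℝ E]
    {f : ℝ → E} {y : ℝ} {D : E} (hy : y ≠ 0) (hf : DifferentiableAt ℝ f (1 / y))
    (h : HasDerivAt (fun x => f (1 / x)) D y) : deriv f (1 / y) = -(y ^ 2) • D := by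
  have hinv : HasDerivAt (fun x : ℝ => 1 / x) (-(y ^ 2)⁻¹) y := by
    simpa only [one_div] using hasDerivAt_inv hy
  rw [← (hf.hasDerivAt.scomp y hinv).unique h, smul_smul]
  simp [hy]

lemma memP_of_polyGrowth {N : ℕ} (hN : 1 ≤ N) {φ : ℝ → ℂ} {J J' : ℕ} {a b : ℕ → ℕ → ℂ}
    (ha : ∀ j, PolyGrowth (a j)) (hb : ∀ j, PolyGrowth (b j))
    (hφ : ∀ y : ℝ, 0 < y → φ y = expSum N J a y ∧ φ (1 / y) = expSum N J' b y) : MemP N φ :=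
  ⟨J, J', a, b, ha, hb, fun y hy => ⟨fun j => (ha j).summable_norm_mul_exp hN hy,
    fun j => (hb j).summable_norm_mul_exp hN hy, hφ y hy⟩⟩

lemma hasDerivAt_of_eq_expSum {N J : ℕ} (hN : 1 ≤ N) {c : ℕ → ℕ → ℂ}
    (hc : ∀ j, PolyGrowth (c j)) {f : ℝ → ℂ} (hf : ∀ x : ℝ, 0 < x → f x = expSum N J c x)
    {y : ℝ} (hy : 0 < y) :
    HasDerivAt f (expSum N J (expSumDerivCoeff N (truncCoeff J c)) y) y :=
  (hasDerivAt_expSum hN (PolyGrowth.truncCoeff J hc) (truncCoeff_succ J c) hy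
    ).congr_of_eventuallyEq <| eventually_of_mem (Ioi_mem_nhds hy) fun x hx => by
      rw [expSum_truncCoeff]; exact hf x hx

/-- The class `𝒫` is stable under differentiation: every `φ ∈ 𝒫` is differentiable
on `(0,∞)` and its derivative belongs to `𝒫`. -/
theorem memP_deriv (N : ℕ) (hN : 1 ≤ N) (φ : ℝ → ℂ) (hφ : MemP N φ) :
    (∀ y : ℝ, 0 < y → DifferentiableAt ℝ φ y) ∧ MemP N (deriv φ) := by
  obtain ⟨jI, j0, a, b, ha, hb, hφ⟩ := hφ
  have hderiv : ∀ y : ℝ, 0 < y → HasDerivAt φ _ y :=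
    fun y => hasDerivAt_of_eq_expSum hN ha fun x hx => (hφ x hx).2.2.1
  have hderiv_inv : ∀ y : ℝ, 0 < y → HasDerivAt (fun x => φ (1 / x)) _ y :=
    fun y => hasDerivAt_of_eq_expSum hN hb fun x hx => (hφ x hx).2.2.2
  refine ⟨fun y hy => (hderiv y hy).differentiableAt, memP_of_polyGrowth hN (J' := j0 + 2)
    (PolyGrowth.expSumDerivCoeff N (PolyGrowth.truncCoeff jI ha))
    (PolyGrowth.shiftCoeff 2 (c := -expSumDerivCoeff N (truncCoeff j0 b))
      fun j => (PolyGrowth.expSumDerivCoeff N (PolyGrowth.truncCoeff j0 hb) j).neg)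
    fun y hy => ⟨(hderiv y hy).deriv, ?_⟩⟩
  rw [deriv_one_div_eq_of_hasDerivAt_comp hy.ne' (hderiv _ (by positivity)).differentiableAt
    (hderiv_inv y hy), expSum_shiftCoeff, expSum_neg, Complex.real_smul]
  push_cast; ring
end

section
/- The expansion coefficients of a function in 𝒫 are uniquely determined. Equivalently: fix J ≥ 0 and sequences (a_n^{(j)})_{n≥0} of polynomial growth for 0 ≤ j ≤ J; if Σ_{j=0}^{J} y^j Σ_{n=0}^{∞} a_n^{(j)} e^{−2πny/N} = 0 for all y > 0, then a_n^{(j)} = 0 for all 0 ≤ j ≤ J and all n ≥ 0. -/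
open Filter Topology Polynomial

noncomputable def qSeries (c : ℕ → ℂ) (q : ℂ) : ℂ :=
  ∑' m, c m * q ^ m

theorem qSeries_zero (c : ℕ → ℂ) : qSeries c 0 = c 0 := by
  rw [qSeries, tsum_eq_single 0 fun m hm => by simp [hm]]
  simp

theorem qSeries_eq_sum_add_pow_mul {c : ℕ → ℂ} {q : ℂ} (hs : Summable fun m => c m * q ^ m)
    (n : ℕ) :
    qSeries c q = ∑ m ∈ Finset.range n, c m * q ^ m + q ^ n * qSeries (fun i => c (i + n)) q := by
  rw [qSeries, ← hs.sum_add_tsum_nat_add n, qSeries, ← tsum_mul_left]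
  congr 1
  exact tsum_congr fun i => by ring

theorem norm_exp_neg_mul_lt_one {t y : ℝ} (ht : 0 < t) (hy : 0 < y) :
    ‖((Real.exp (-(t * y)) : ℝ) : ℂ)‖ < 1 := by
  rw [Complex.norm_real, Real.norm_of_nonneg (Real.exp_pos _).le, Real.exp_lt_one_iff]
  nlinarith

namespace PolyGrowth

variable {c : ℕ → ℂ}

theorem comp_add_right (hc : PolyGrowth c) (d : ℕ) : PolyGrowth fun n => c (n + d) := by
  obtain ⟨C, k, hC, hb⟩ := hc
  refine ⟨C * (1 + d) ^ k, k, by positivity, fun n => ?_⟩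
  calc ‖c (n + d)‖ ≤ C * (1 + (n + d : ℝ)) ^ k := by exact_mod_cast hb (n + d)
    _ ≤ C * ((1 + d) * (1 + n) : ℝ) ^ k := by
      gcongr
      nlinarith [mul_nonneg (Nat.cast_nonneg (α := ℝ) d) (Nat.cast_nonneg (α := ℝ) n)]
    _ = C * (1 + d) ^ k * (1 + n) ^ k := by rw [mul_pow, mul_assoc]

theorem summable_norm_mul_pow (hc : PolyGrowth c) {r : ℝ} (hr0 : 0 < r) (hr1 : r < 1) :
    Summable fun m => ‖c m‖ * r ^ m := by
  obtain ⟨C, k, hC, hb⟩ := hc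
  have hgeom : Summable fun m : ℕ => ((m + 1 : ℕ) : ℝ) ^ k * r ^ (m + 1) :=
    (summable_nat_add_iff 1).2 <| summable_pow_mul_geometric_of_norm_lt_one (R := ℝ) k <| by
      rwa [Real.norm_of_nonneg hr0.le]
  refine .of_nonneg_of_le (fun m => by positivity) (fun m => ?_) (hgeom.mul_left (C * r⁻¹))
  calc ‖c m‖ * r ^ m ≤ C * (1 + m) ^ k * r ^ m := by gcongr; exact hb m
    _ = C * r⁻¹ * (((m + 1 : ℕ) : ℝ) ^ k * r ^ (m + 1)) := by
      push_cast
      field_simp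
      ring

theorem summable_mul_pow (hc : PolyGrowth c) {q : ℂ} (hq : ‖q‖ < 1) :
    Summable fun m => c m * q ^ m := by
  obtain ⟨r, hqr, hr1⟩ := exists_between hq
  refine (hc.summable_norm_mul_pow ((norm_nonneg q).trans_lt hqr) hr1).of_norm_bounded
    fun m => ?_
  rw [norm_mul, norm_pow]
  gcongr

theorem continuousAt_qSeries (hc : PolyGrowth c) : ContinuousAt (qSeries c) 0 := by
  have hcont : ContinuousOn (qSeries c) (Metric.closedBall 0 2⁻¹) := by
    refine continuousOn_tsum (fun m => by fun_prop)
      (hc.summable_norm_mul_pow (r := 2⁻¹) (by norm_num) (by norm_num)) fun m q hq => ?_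
    rw [norm_mul, norm_pow]
    gcongr
    simpa using hq
  exact hcont.continuousAt (Metric.closedBall_mem_nhds 0 (by norm_num))

theorem tendsto_pow_mul_qSeries_exp_sub (hc : PolyGrowth c) {t : ℝ} (ht : 0 < t) (k : ℕ) :
    Tendsto (fun y : ℝ => (y : ℂ) ^ k * (qSeries c (Real.exp (-(t * y))) - c 0)) atTop (𝓝 0) := by
  have hexp : Tendsto (fun y : ℝ => ((Real.exp (-(t * y)) : ℝ) : ℂ)) atTop (𝓝 0) :=
    (Complex.continuous_ofReal.tendsto' 0 0 Complex.ofReal_zero).comp <|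
      Real.tendsto_exp_neg_atTop_nhds_zero.comp (tendsto_id.const_mul_atTop ht)
  have htail : Tendsto (fun y : ℝ => qSeries (fun i => c (i + 1)) (Real.exp (-(t * y))))
      atTop (𝓝 (c 1)) := by
    have := (hc.comp_add_right 1).continuousAt_qSeries.tendsto.comp hexp
    rwa [qSeries_zero, zero_add] at this
  have hdecay : Tendsto (fun y : ℝ => ((y ^ k * Real.exp (-(t * y)) : ℝ) : ℂ)) atTop (𝓝 0) := by
    have := tendsto_rpow_mul_exp_neg_mul_atTop_nhds_zero k t ht
    simp only [Real.rpow_natCast, neg_mul] at this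
    exact (Complex.continuous_ofReal.tendsto' 0 0 Complex.ofReal_zero).comp this
  have hprod := hdecay.mul htail
  rw [zero_mul] at hprod
  refine hprod.congr' ?_
  filter_upwards [eventually_gt_atTop 0] with y hy
  rw [qSeries_eq_sum_add_pow_mul (hc.summable_mul_pow (norm_exp_neg_mul_lt_one ht hy)) 1,
    Finset.sum_range_one, pow_zero, mul_one, pow_one, add_sub_cancel_left, Complex.ofReal_mul,
    Complex.ofReal_pow, mul_assoc]

end PolyGrowth

theorem Polynomial.eq_zero_of_tendsto_eval_ofReal_atTop {P : ℂ[X]}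
    (h : Tendsto (fun y : ℝ => P.eval (y : ℂ)) atTop (𝓝 0)) : P = 0 := by
  by_cases hdeg : 0 < P.degree
  · have hnorm := P.tendsto_norm_atTop hdeg (z := fun y : ℝ => (y : ℂ)) <| by
      simpa only [Complex.norm_real, Real.norm_eq_abs] using tendsto_abs_atTop_atTop
    exact absurd h.norm (not_tendsto_nhds_of_tendsto_atTop hnorm _)
  · rw [eq_C_of_degree_le_zero (not_lt.1 hdeg)] at h ⊢
    simp only [eval_C] at h
    rw [tendsto_const_nhds_iff.1 h, C_0]

section Uniqueness

variable {t : ℝ} {J : ℕ} {a : ℕ → ℕ → ℂ}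

theorem coeff_eq_zero_of_forall_lt_eq_zero (ht : 0 < t) (ha : ∀ j, PolyGrowth (a j))
    (h : ∀ y : ℝ, 0 < y →
      ∑ j ∈ Finset.range (J + 1), (y : ℂ) ^ j * qSeries (a j) (Real.exp (-(t * y))) = 0)
    {n : ℕ} (hlt : ∀ m < n, ∀ j ≤ J, a j m = 0) : ∀ j ≤ J, a j n = 0 := by
  have hshift : ∀ y : ℝ, 0 < y → ∑ j ∈ Finset.range (J + 1),
      (y : ℂ) ^ j * qSeries (fun i => a j (i + n)) (Real.exp (-(t * y))) = 0 := by
    intro y hy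
    have hq0 : ((Real.exp (-(t * y)) : ℝ) : ℂ) ^ n ≠ 0 := by simp
    refine (mul_eq_zero.1 ?_).resolve_left hq0
    rw [Finset.mul_sum, ← h y hy]
    refine Finset.sum_congr rfl fun j hj => ?_
    have hjJ : j ≤ J := Nat.lt_succ_iff.1 (Finset.mem_range.1 hj)
    rw [qSeries_eq_sum_add_pow_mul ((ha j).summable_mul_pow (norm_exp_neg_mul_lt_one ht hy)) n,
      Finset.sum_eq_zero fun m hm => by rw [hlt m (Finset.mem_range.1 hm) j hjJ, zero_mul],
      zero_add]
    ring
  set P : ℂ[X] := ∑ j ∈ Finset.range (J + 1), monomial j (a j n) with hP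
  have hlim : Tendsto (fun y : ℝ => P.eval (y : ℂ)) atTop (𝓝 0) := by
    have := (tendsto_finsetSum (Finset.range (J + 1)) fun j _ =>
      ((ha j).comp_add_right n).tendsto_pow_mul_qSeries_exp_sub ht j).neg
    simp only [Finset.sum_const_zero, neg_zero, zero_add] at this
    refine this.congr' ?_
    filter_upwards [eventually_gt_atTop 0] with y hy
    simp only [hP, eval_finsetSum, eval_monomial, mul_sub, Finset.sum_sub_distrib, hshift y hy]
    simp [mul_comm]
  intro j hj
  have hcoeff := congrArg (coeff · j) (Polynomial.eq_zero_of_tendsto_eval_ofReal_atTop hlim)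
  simpa [hP, finsetSum_coeff, coeff_monomial, Nat.lt_succ_iff.2 hj] using hcoeff

theorem coeff_eq_zero_of_sum_qSeries_eq_zero (ht : 0 < t) (ha : ∀ j, PolyGrowth (a j))
    (h : ∀ y : ℝ, 0 < y →
      ∑ j ∈ Finset.range (J + 1), (y : ℂ) ^ j * qSeries (a j) (Real.exp (-(t * y))) = 0) :
    ∀ j ≤ J, ∀ n, a j n = 0 := by
  suffices ∀ n, ∀ j ≤ J, a j n = 0 from fun j hj n => this n j hj
  intro n
  induction n using Nat.strong_induction_on with
  | _ n ih => exact coeff_eq_zero_of_forall_lt_eq_zero ht ha h ih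

end Uniqueness

theorem expSum_eq_sum_qSeries (N J : ℕ) (a : ℕ → ℕ → ℂ) (y : ℝ) :
    expSum N J a y = ∑ j ∈ Finset.range (J + 1),
      (y : ℂ) ^ j * qSeries (a j) (Real.exp (-(2 * Real.pi / N * y))) := by
  refine Finset.sum_congr rfl fun j _ => congrArg _ <| tsum_congr fun m => ?_
  rw [← Complex.ofReal_pow, ← Real.exp_nat_mul]
  ring_nf

/-- Uniqueness of the expansion coefficients of a function in `𝒫`: if the expansion
vanishes identically on `(0,∞)`, then all coefficients vanish. -/
theorem expSum_coeff_unique (N : ℕ) (hN : 1 ≤ N) (J : ℕ) (a : ℕ → ℕ → ℂ)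
    (ha : ∀ j, PolyGrowth (a j))
    (h : ∀ y : ℝ, 0 < y → expSum N J a y = 0) :
    ∀ j ≤ J, ∀ n : ℕ, a j n = 0 :=
  coeff_eq_zero_of_sum_qSeries_eq_zero (div_pos Real.two_pi_pos (by exact_mod_cast hN)) ha
    fun y hy => expSum_eq_sum_qSeries N J a y ▸ h y hy
end
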